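/- Every exceptional graph contains no cycle whose length is divisible by 3. -/

import Mathlib

open SimpleGraph

/-- `ExcAux G r x y`: `G` is an exceptional graph with root `r`, whose two degree-2
vertices other than `r` are `x` and `y`.  Exceptional graphs are built recursively
from `K_{2,3}` (the root `r` being one of its three degree-2 vertices):
* if `x` and `y` are non-adjacent, one may add a new path of length 3 joining them;
* if `x` and `y` are adjacent, one may add a new vertex whose neighbourhood is that
  of `x` (or of `y`), or a new 4-cycle `a b c d a` together with the edges `x a`
  and `c y`.
Newly added vertices are required to be fresh, i.e. isolated beforehand. -/
inductive ExcAux {V : Type*} : SimpleGraph V → V → V → V → Prop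
  | base (r x y a b : V) (hd : ([r, x, y, a, b] : List V).Pairwise (· ≠ ·)) :
      ExcAux (SimpleGraph.fromEdgeSet
        {s(r, a), s(r, b), s(x, a), s(x, b), s(y, a), s(y, b)}) r x y
  | symm (G : SimpleGraph V) (r x y : V) : ExcAux G r x y → ExcAux G r y x
  | addPath (H : SimpleGraph V) (r x y p q : V) :
      ExcAux H r x y → ¬ H.Adj x y → p ≠ q →
      H.neighborSet p = ∅ → H.neighborSet q = ∅ →
      ExcAux (H ⊔ SimpleGraph.fromEdgeSet {s(x, p), s(p, q), s(q, y)}) r p q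
  | addTwin (H : SimpleGraph V) (r x y w a : V) :
      ExcAux H r x y → H.Adj x y → H.neighborSet x = {y, a} →
      H.neighborSet w = ∅ →
      ExcAux (H ⊔ SimpleGraph.fromEdgeSet {s(w, y), s(w, a)}) r x w
  | addSquare (H : SimpleGraph V) (r x y a b c d : V) :
      ExcAux H r x y → H.Adj x y →
      ([a, b, c, d] : List V).Pairwise (· ≠ ·) →
      H.neighborSet a = ∅ → H.neighborSet b = ∅ →
      H.neighborSet c = ∅ → H.neighborSet d = ∅ →
      ExcAux (H ⊔ SimpleGraph.fromEdgeSet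
        {s(a, b), s(b, c), s(c, d), s(d, a), s(x, a), s(c, y)}) r b d

/-!
The construction steps preserve a stronger invariant of the designated pair `x, y`: both are
non-isolated, no cycle has length divisible by 3, and if `x, y` are non-adjacent then no `x`–`y`
path has length divisible by 3. Each step attaches fresh vertices along new paths, so a cycle
through a new vertex is a new path closed up by a path of the old graph `H` between its ends. Its
length is controlled modulo 3 by the invariant of `H` together with one remark: a path between the
ends of an edge of `H` either is that edge or closes up with it to a cycle of `H`, so its length is
not 2 modulo 3. The base `K_{2,3}` is bipartite on five vertices, so its cycles have length 4 and
its `x`–`y` paths length 2 or 4.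
-/

namespace SimpleGraph

variable {V : Type*} {G H : SimpleGraph V}

def ThreeDvdCycleFree (G : SimpleGraph V) : Prop :=
  ∀ ⦃u : V⦄ (c : G.Walk u u), c.IsCycle → ¬ 3 ∣ c.length

theorem sup_fromEdgeSet_adj_of_neighborSet_eq_empty {E : Set (Sym2 V)} {p v : V}
    (hp : H.neighborSet p = ∅) : (H ⊔ fromEdgeSet E).Adj p v ↔ s(p, v) ∈ E ∧ p ≠ v := by
  have : ¬ H.Adj p v := fun h => (Set.eq_empty_iff_forall_notMem.mp hp) v h
  simp [this]

theorem adj_of_sup_fromEdgeSet_adj {E : Set (Sym2 V)} {S : Set V}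
    (hE : ∀ e ∈ E, ∃ z ∈ e, z ∈ S) {u v : V} (h : (H ⊔ fromEdgeSet E).Adj u v)
    (hu : u ∉ S) (hv : v ∉ S) : H.Adj u v := by
  rcases h with h | ⟨he, -⟩
  · exact h
  · obtain ⟨z, hz, hzS⟩ := hE _ he
    rcases Sym2.mem_iff.mp hz with rfl | rfl <;> contradiction

theorem ne_of_neighborSet_eq_empty {p x v : V} (hp : H.neighborSet p = ∅) (h : H.Adj x v) :
    p ≠ x := by
  rintro rfl
  exact (Set.eq_empty_iff_forall_notMem.mp hp) v h

namespace Walk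

theorem support_subset_of_not_nil {s : Set V} (hs : ∀ u v, G.Adj u v → u ∈ s) {u v : V}
    {p : G.Walk u v} (hp : ¬ p.Nil) : ∀ z ∈ p.support, z ∈ s := by
  induction p with
  | nil => simp at hp
  | @cons u w v h q ih =>
    intro z hz
    rcases List.mem_cons.mp hz with rfl | hz
    · exact hs _ _ h
    · by_cases hq : q.Nil
      · rw [Walk.nil_iff_support_eq.mp hq, List.mem_singleton] at hz
        exact hz ▸ hs _ _ h.symm
      · exact ih hq z hz

theorem IsPath.length_lt_card {u v : V} {p : G.Walk u v} (hp : p.IsPath) {s : Finset V}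
    (hs : ∀ z ∈ p.support, z ∈ s) : p.length < s.card := by
  classical
  have h := Finset.card_le_card (s := p.support.toFinset) fun z hz => hs z (by simpa using hz)
  rw [List.toFinset_card_of_nodup hp.support_nodup, length_support] at h
  omega

theorem exists_adj_mem_support {u v w : V} (p : G.Walk u v) (hw : w ∈ p.support) (hwv : w ≠ v) :
    ∃ z, G.Adj w z ∧ z ∈ p.support := by
  obtain ⟨q, r, rfl⟩ := p.mem_support_iff_exists_append.mp hw
  obtain ⟨z, h, r', rfl⟩ := exists_eq_cons_of_ne hwv r
  exact ⟨z, h, by simp⟩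

theorem exists_eq_cons_of_notMem_support {p t z₁ z₂ : V} (hN : ∀ v, G.Adj p v → v = z₁ ∨ v = z₂)
    (hpt : p ≠ t) (m : G.Walk p t) (h₁ : z₁ ∉ m.support) :
    ∃ (h : G.Adj p z₂) (m' : G.Walk z₂ t), m = cons h m' := by
  obtain ⟨z, h, m', rfl⟩ := exists_eq_cons_of_ne hpt m
  rcases hN z h with rfl | rfl
  · simp at h₁
  · exact ⟨h, m', rfl⟩

theorem edges_subset_edgeSet_of_forall_notMem {S : Set V}
    (hGH : ∀ u v, G.Adj u v → u ∉ S → v ∉ S → H.Adj u v) {u v : V} (p : G.Walk u v)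
    (hp : ∀ z ∈ p.support, z ∉ S) : ∀ e ∈ p.edges, e ∈ H.edgeSet := by
  induction p with
  | nil => simp
  | cons h q ih =>
    simp only [support_cons, List.mem_cons, forall_eq_or_imp] at hp
    simp only [edges_cons, List.mem_cons, forall_eq_or_imp]
    exact ⟨hGH _ _ h hp.1 (hp.2 _ q.start_mem_support), ih hp.2⟩

theorem IsPath.exists_isPath_of_forall_notMem {S : Set V}
    (hGH : ∀ u v, G.Adj u v → u ∉ S → v ∉ S → H.Adj u v) {u v : V} {p : G.Walk u v}
    (hp : p.IsPath) (hS : ∀ z ∈ p.support, z ∉ S) :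
    ∃ q : H.Walk u v, q.IsPath ∧ q.length = p.length :=
  ⟨_, hp.transfer (p.edges_subset_edgeSet_of_forall_notMem hGH hS), length_transfer _ _⟩

theorem IsCycle.exists_isCycle_of_forall_notMem {S : Set V}
    (hGH : ∀ u v, G.Adj u v → u ∉ S → v ∉ S → H.Adj u v) {u : V} {c : G.Walk u u}
    (hc : c.IsCycle) (hS : ∀ z ∈ c.support, z ∉ S) :
    ∃ c' : H.Walk u u, c'.IsCycle ∧ c'.length = c.length :=
  ⟨_, hc.transfer (c.edges_subset_edgeSet_of_forall_notMem hGH hS), length_transfer _ _⟩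

theorem IsCycle.exists_isPath_of_mem_support {u p : V} {c : G.Walk u u} (hc : c.IsCycle)
    (hp : p ∈ c.support) :
    ∃ (z₁ z₂ : V) (m : G.Walk z₁ z₂), z₁ ≠ z₂ ∧ G.Adj p z₁ ∧ G.Adj p z₂ ∧ m.IsPath ∧
      p ∉ m.support ∧ m.support ⊆ c.support ∧ c.length = m.length + 2 := by
  classical
  have hsupp : (c.rotate p hp).support ⊆ c.support := fun z hz =>
    (c.mem_support_rotate_iff p hp).mp hz
  have hc' := hc.rotate hp
  rw [← c.length_rotate p hp]
  generalize c.rotate p hp = c' at hc' hsupp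
  cases c' with
  | nil => exact absurd hc' not_isCycle_nil
  | cons h₁ t =>
    obtain ⟨ht, hedge⟩ := (cons_isCycle_iff t h₁).mp hc'
    obtain ⟨w, h₂, m, hrev⟩ := exists_eq_cons_of_ne h₁.ne t.reverse
    have hrevp : (cons h₂ m).IsPath := hrev ▸ ht.reverse
    have hmt : m.support ⊆ t.support := fun v hv => by
      have : v ∈ t.reverse.support := by simp [hrev, hv]
      simpa using this
    refine ⟨w, _, m, ?_, h₂, h₁, hrevp.of_cons, ((cons_isPath_iff _ _).mp hrevp).2,
      fun v hv => hsupp (by simpa using Or.inr (hmt hv)), ?_⟩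
    · rintro rfl
      have : s(p, w) ∈ t.reverse.edges := by simp [hrev]
      exact hedge (by simpa using this)
    · have := congrArg length hrev
      simp only [length_reverse, length_cons] at this ⊢
      omega

theorem IsCycle.exists_isPath_of_forall_adj {u p z₁ z₂ : V} {c : G.Walk u u} (hc : c.IsCycle)
    (hN : ∀ v, G.Adj p v ↔ v = z₁ ∨ v = z₂) (hp : p ∈ c.support) :
    ∃ m : G.Walk z₁ z₂, m.IsPath ∧ p ∉ m.support ∧ c.length = m.length + 2 := by
  obtain ⟨w₁, w₂, m, hne, h₁, h₂, hm, hpm, -, hlen⟩ := hc.exists_isPath_of_mem_support hp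
  rcases (hN w₁).mp h₁ with rfl | rfl <;> rcases (hN w₂).mp h₂ with rfl | rfl
  · exact absurd rfl hne
  · exact ⟨m, hm, hpm, hlen⟩
  · exact ⟨m.reverse, hm.reverse, by simpa using hpm, by simpa using hlen⟩
  · exact absurd rfl hne

theorem IsPath.length_eq_one_of_forall_adj {x y a : V} (hN : ∀ v, G.Adj x v → v = y ∨ v = a)
    (hxa : x ≠ a) {r : G.Walk x a} (hr : r.IsPath) (hy : y ∉ r.support) : r.length = 1 := by
  obtain ⟨h, r', rfl⟩ := exists_eq_cons_of_notMem_support hN hxa r hy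
  simp [length_eq_zero_iff.mpr (isPath_iff_nil.mp hr.of_cons)]

theorem IsPath.length_eq_two_of_mem_support {x y a : V} (hN : ∀ v, G.Adj x v ↔ v = y ∨ v = a)
    {m : G.Walk y a} (hm : m.IsPath) (hx : x ∈ m.support) : m.length = 2 := by
  have hxy : x ≠ y := ((hN y).mpr (Or.inl rfl)).ne
  have hxa : x ≠ a := ((hN a).mpr (Or.inr rfl)).ne
  obtain ⟨q, r, hq, hr, rfl⟩ := hm.mem_support_iff_exists_append.mp hx
  have hr1 : r.length = 1 := hr.length_eq_one_of_forall_adj (fun v => (hN v).mp) hxa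
    fun hy => hm.ne_of_mem_support_of_append hxy.symm q.start_mem_support hy rfl
  have hq1 : q.reverse.length = 1 := hq.reverse.length_eq_one_of_forall_adj
    (fun v hv => ((hN v).mp hv).symm) hxy
    fun ha => hm.ne_of_mem_support_of_append hxa.symm (by simpa using ha) r.end_mem_support rfl
  simp only [length_append, ← length_reverse q, hq1, hr1]

theorem IsPath.length_eq_two_or_exists_isPath {a b c d : V}
    (hNb : ∀ v, G.Adj b v → v = a ∨ v = c) (hNd : ∀ v, G.Adj d v → v = a ∨ v = c)
    (hbd : b ≠ d) (hda : d ≠ a) (hdc : d ≠ c) {P : G.Walk b d} (hP : P.IsPath) :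
    P.length = 2 ∨ ∃ m : G.Walk a c, m.IsPath ∧ b ∉ m.support ∧ P.length = m.length + 2 := by
  obtain ⟨z, hz, P₁, rfl⟩ := exists_eq_cons_of_ne hbd P
  obtain ⟨hP₁, hbP₁⟩ := (cons_isPath_iff _ _).mp hP
  have hdz : d ≠ z := by rcases hNb z hz with rfl | rfl; exacts [hda, hdc]
  obtain ⟨z', hz', P₂, hrev⟩ := exists_eq_cons_of_ne hdz P₁.reverse
  have hP₂ : P₂.IsPath := (hrev ▸ hP₁.reverse : (cons hz' P₂).IsPath).of_cons
  have hbP₂ : b ∉ P₂.support := fun hb => hbP₁ (by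
    have : b ∈ P₁.reverse.support := by simp [hrev, hb]
    simpa using this)
  have hlen : (cons hz P₁).length = P₂.length + 2 := by simpa using congrArg length hrev
  rcases hNb z hz with rfl | rfl <;> rcases hNd z' hz' with rfl | rfl
  · simp [hlen, length_eq_zero_iff.mpr (isPath_iff_nil.mp hP₂)]
  · exact Or.inr ⟨P₂.reverse, hP₂.reverse, by simpa using hbP₂, by simpa using hlen⟩
  · exact Or.inr ⟨P₂, hP₂, hbP₂, hlen⟩
  · simp [hlen, length_eq_zero_iff.mpr (isPath_iff_nil.mp hP₂)]

theorem IsCycle.exists_adj_mem_support_ne {u p : V} {c : G.Walk u u} (hc : c.IsCycle)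
    (hp : p ∈ c.support) (z : V) : ∃ w, G.Adj p w ∧ w ∈ c.support ∧ w ≠ z := by
  obtain ⟨w₁, w₂, m, hne, h₁, h₂, -, -, hsupp, -⟩ := hc.exists_isPath_of_mem_support hp
  by_cases hz : w₁ = z
  · exact ⟨w₂, h₂, hsupp m.end_mem_support, hz ▸ hne.symm⟩
  · exact ⟨w₁, h₁, hsupp m.start_mem_support, hz⟩

end Walk

open Walk

theorem ThreeDvdCycleFree.not_dvd_length_add_one (hG : G.ThreeDvdCycleFree) {x y : V}
    (hxy : G.Adj x y) {t : G.Walk y x} (ht : t.IsPath) : ¬ 3 ∣ t.length + 1 := by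
  by_cases he : s(x, y) ∈ t.edges
  · rw [ht.length_eq_one_of_mem_edges (by rwa [Sym2.eq_swap])]
    decide
  · simpa using hG _ ((cons_isCycle_iff t hxy).mpr ⟨ht, he⟩)

theorem ThreeDvdCycleFree.not_dvd_length_add_two (hG : G.ThreeDvdCycleFree) {x y a : V}
    (hN : ∀ v, G.Adj x v ↔ v = y ∨ v = a) {m : G.Walk y a} (hm : m.IsPath) :
    ¬ 3 ∣ m.length + 2 := by
  by_cases hx : x ∈ m.support
  · rw [hm.length_eq_two_of_mem_support hN hx]
    decide
  · simpa using hG.not_dvd_length_add_one ((hN y).mpr (Or.inl rfl))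
      (hm.concat hx ((hN a).mpr (Or.inr rfl)).symm)

/-- `a e c f` is a 4-cycle hung on the edge `x y` of `H` by the edges `a x` and `c y`. -/
theorem ThreeDvdCycleFree.not_dvd_length_add_two_of_square (hH : H.ThreeDvdCycleFree)
    {x y a c e f : V} {S : Set V} (hxy : H.Adj x y)
    (hGH : ∀ u v, G.Adj u v → u ∉ S → v ∉ S → H.Adj u v)
    (hS : ∀ z ∈ S, z = a ∨ z = c ∨ z = e ∨ z = f)
    (hNa : ∀ v, G.Adj a v → v = e ∨ v = f ∨ v = x) (hNc : ∀ v, G.Adj c v → v = e ∨ v = f ∨ v = y)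
    (hNf : ∀ v, G.Adj f v → v = a ∨ v = c) (hac : a ≠ c) (hcx : c ≠ x) (hfc : f ≠ c)
    (hfx : f ≠ x) {m : G.Walk a c} (hm : m.IsPath) (he : e ∉ m.support) :
    ¬ 3 ∣ m.length + 2 := by
  obtain ⟨z, h, m₁, rfl⟩ := exists_eq_cons_of_ne hac m
  obtain ⟨hm₁, ham₁⟩ := (cons_isPath_iff _ _).mp hm
  rw [support_cons, List.mem_cons, not_or] at he
  rcases hNa z h with rfl | rfl | rfl
  · exact absurd m₁.start_mem_support he.2
  · obtain ⟨_, m₂, rfl⟩ := exists_eq_cons_of_notMem_support hNf hfc m₁ ham₁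
    simp [length_eq_zero_iff.mpr (isPath_iff_nil.mp hm₁.of_cons)]
  · obtain ⟨z', h', m₂, hrev⟩ := exists_eq_cons_of_ne hcx m₁.reverse
    have hm₂ : (cons h' m₂).IsPath := hrev ▸ hm₁.reverse
    have hsupp : ∀ v ∈ m₂.support, v ∈ m₁.support := fun v hv => by
      have : v ∈ m₁.reverse.support := by simp [hrev, hv]
      simpa using this
    have hc₂ : c ∉ m₂.support := ((cons_isPath_iff _ _).mp hm₂).2
    have ha₂ : a ∉ m₂.support := fun ha => ham₁ (hsupp a ha)
    have he₂ : e ∉ m₂.support := fun he₂ => he.2 (hsupp e he₂)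
    have hf₂ : f ∉ m₂.support := fun hf => by
      obtain ⟨g, hg, hg₂⟩ := m₂.exists_adj_mem_support hf hfx
      rcases hNf g hg with rfl | rfl <;> contradiction
    have hlen : m₁.length = m₂.length + 1 := by simpa using congrArg length hrev
    rcases hNc z' h' with rfl | rfl | rfl
    · exact absurd m₂.start_mem_support he₂
    · exact absurd m₂.start_mem_support hf₂
    · obtain ⟨mH, hmH, hlenH⟩ := hm₂.of_cons.exists_isPath_of_forall_notMem hGH
          fun z hz hzS => by rcases hS z hzS with rfl | rfl | rfl | rfl <;> contradiction
      have := hH.not_dvd_length_add_one hxy hmH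
      simp only [length_cons, hlen, hlenH] at this ⊢
      omega

structure ExcInvariant (G : SimpleGraph V) (x y : V) : Prop where
  exists_adj_left : ∃ v, G.Adj x v
  exists_adj_right : ∃ v, G.Adj y v
  threeDvdCycleFree : G.ThreeDvdCycleFree
  not_dvd_length : ¬ G.Adj x y → ∀ P : G.Walk x y, P.IsPath → ¬ 3 ∣ P.length

namespace ExcInvariant

theorem base {r x y a b : V} (hd : ([r, x, y, a, b] : List V).Pairwise (· ≠ ·)) :
    ExcInvariant (fromEdgeSet {s(r, a), s(r, b), s(x, a), s(x, b), s(y, a), s(y, b)}) x y := by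
  simp only [List.pairwise_cons, List.mem_cons, List.not_mem_nil, or_false, forall_eq_or_imp,
    forall_eq, List.Pairwise.nil, and_true] at hd
  obtain ⟨⟨hrx, hry, hra, hrb⟩, ⟨hxy, hxa, hxb⟩, ⟨hya, hyb⟩, hab, -⟩ := hd
  set K := fromEdgeSet {s(r, a), s(r, b), s(x, a), s(x, b), s(y, a), s(y, b)}
  have hadj : ∀ u v, K.Adj u v ↔ (u = a ∨ u = b) ∧ (v = r ∨ v = x ∨ v = y) ∨
      (v = a ∨ v = b) ∧ (u = r ∨ u = x ∨ u = y) := fun u v => by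
    simp only [K, fromEdgeSet_adj, Set.mem_insert_iff, Set.mem_singleton_iff, Sym2.eq_iff]
    grind
  classical
  let col : K.Coloring Bool := Coloring.mk (fun v => decide (v = a ∨ v = b)) fun h => by
    rw [hadj] at h
    grind
  have hs : ∀ u v, K.Adj u v → u ∈ (({r, x, y, a, b} : Finset V) : Set V) := fun u v h => by
    rw [hadj] at h
    simp only [Finset.coe_insert, Finset.coe_singleton, Set.mem_insert_iff,
      Set.mem_singleton_iff]
    tauto
  refine ⟨⟨a, (hadj x a).mpr (by tauto)⟩, ⟨a, (hadj y a).mpr (by tauto)⟩,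
    fun u c hc hdvd => ?_, fun _ P hP hdvd => ?_⟩
  · have heven : Even c.length := (col.even_length_iff_congr c).mpr Iff.rfl
    have hlt : c.tail.length < 5 := lt_of_lt_of_le (hc.isPath_tail.length_lt_card fun z hz =>
      support_subset_of_not_nil hs hc.not_nil z (by
        rw [support_tail_of_not_nil c hc.not_nil] at hz
        exact List.mem_of_mem_tail hz)) Finset.card_le_five
    have := hc.three_le_length
    rw [length_tail] at hlt
    obtain ⟨k, hk⟩ := heven
    omega
  · have heven : Even P.length := (col.even_length_iff_congr P).mpr (by
      change decide _ = true ↔ decide _ = true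
      simp [hxa, hxb, hya, hyb])
    have hlt : P.length < 5 := lt_of_lt_of_le (hP.length_lt_card
      (support_subset_of_not_nil hs (not_nil_of_ne hxy))) Finset.card_le_five
    have hpos : P.length ≠ 0 := fun h0 => hxy (eq_of_length_eq_zero h0)
    obtain ⟨k, hk⟩ := heven
    omega

theorem symm {x y : V} (h : ExcInvariant G x y) : ExcInvariant G y x :=
  ⟨h.exists_adj_right, h.exists_adj_left, h.threeDvdCycleFree, fun hyx P hP => by
    simpa using h.not_dvd_length (fun hxy => hyx hxy.symm) P.reverse hP.reverse⟩

theorem addPath {x y p q : V} (h : ExcInvariant H x y) (hxy : ¬ H.Adj x y)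
    (hpq : p ≠ q) (hp : H.neighborSet p = ∅) (hq : H.neighborSet q = ∅) :
    ExcInvariant (H ⊔ fromEdgeSet {s(x, p), s(p, q), s(q, y)}) p q := by
  obtain ⟨⟨x', hx'⟩, ⟨y', hy'⟩, hH, hpath⟩ := h
  have hpx := ne_of_neighborSet_eq_empty hp hx'
  have hpy := ne_of_neighborSet_eq_empty hp hy'
  have hqx := ne_of_neighborSet_eq_empty hq hx'
  have hqy := ne_of_neighborSet_eq_empty hq hy'
  set G' := H ⊔ fromEdgeSet {s(x, p), s(p, q), s(q, y)}
  have hNp : ∀ v, G'.Adj p v ↔ v = x ∨ v = q := fun v => by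
    rw [sup_fromEdgeSet_adj_of_neighborSet_eq_empty hp]; aesop
  have hNq : ∀ v, G'.Adj q v ↔ v = p ∨ v = y := fun v => by
    rw [sup_fromEdgeSet_adj_of_neighborSet_eq_empty hq]; aesop
  have hGH : ∀ u v, G'.Adj u v → u ∉ ({p, q} : Set V) → v ∉ ({p, q} : Set V) → H.Adj u v :=
    fun u v => adj_of_sup_fromEdgeSet_adj (by simp)
  have hpq' : G'.Adj p q := (hNp q).mpr (Or.inr rfl)
  refine ⟨⟨q, hpq'⟩, ⟨p, hpq'.symm⟩, fun u c hc hdvd => ?_, fun h => absurd hpq' h⟩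
  by_cases hpqc : p ∈ c.support ∨ q ∈ c.support
  · have hqc : q ∈ c.support := hpqc.elim (fun hpc => by
      obtain ⟨w, hw, hwc, hwx⟩ := hc.exists_adj_mem_support_ne hpc x
      exact ((hNp w).mp hw).resolve_left hwx ▸ hwc) id
    obtain ⟨m, hm, hqm, hlen⟩ := hc.exists_isPath_of_forall_adj hNq hqc
    obtain ⟨_, m', rfl⟩ := exists_eq_cons_of_notMem_support
      (fun v hv => ((hNp v).mp hv).symm) hpy m hqm
    have hpm : p ∉ m'.support := ((cons_isPath_iff _ _).mp hm).2
    have hqm' : q ∉ m'.support := fun h => hqm (by simp [h])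
    obtain ⟨mH, hmH, hlenH⟩ := hm.of_cons.exists_isPath_of_forall_notMem hGH
      fun z hz hzS => by rcases hzS with rfl | rfl; exacts [hpm hz, hqm' hz]
    exact hpath hxy mH hmH (by simp only [length_cons] at hlen; omega)
  · obtain ⟨cH, hcH, hlen⟩ := hc.exists_isCycle_of_forall_notMem hGH
      fun z hz hzS => hpqc (by rcases hzS with rfl | rfl <;> simp [hz])
    exact hH cH hcH (hlen ▸ hdvd)

theorem addTwin {x y w a : V} (h : ExcInvariant H x y) (hxy : H.Adj x y)
    (hx : H.neighborSet x = {y, a}) (hw : H.neighborSet w = ∅) :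
    ExcInvariant (H ⊔ fromEdgeSet {s(w, y), s(w, a)}) x w := by
  have hNx : ∀ v, H.Adj x v ↔ v = y ∨ v = a := fun v => by
    rw [← mem_neighborSet, hx]; simp
  have hxa : H.Adj x a := (hNx a).mpr (Or.inr rfl)
  have hwx := ne_of_neighborSet_eq_empty hw hxy
  have hwy := ne_of_neighborSet_eq_empty hw hxy.symm
  have hwa := ne_of_neighborSet_eq_empty hw hxa.symm
  set G' := H ⊔ fromEdgeSet {s(w, y), s(w, a)}
  have hNw : ∀ v, G'.Adj w v ↔ v = y ∨ v = a := fun v => by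
    rw [sup_fromEdgeSet_adj_of_neighborSet_eq_empty hw]; aesop
  have hGH : ∀ u v, G'.Adj u v → u ∉ ({w} : Set V) → v ∉ ({w} : Set V) → H.Adj u v :=
    fun u v => adj_of_sup_fromEdgeSet_adj (by simp)
  refine ⟨⟨y, Or.inl hxy⟩, ⟨y, (hNw y).mpr (Or.inl rfl)⟩, fun u c hc hdvd => ?_,
    fun _ P hP hdvd => ?_⟩
  · by_cases hwc : w ∈ c.support
    · obtain ⟨m, hm, hwm, hlen⟩ := hc.exists_isPath_of_forall_adj hNw hwc
      obtain ⟨mH, hmH, hlenH⟩ := hm.exists_isPath_of_forall_notMem hGH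
        fun z hz hzw => hwm (hzw ▸ hz)
      exact h.threeDvdCycleFree.not_dvd_length_add_two hNx hmH (by omega)
    · obtain ⟨cH, hcH, hlen⟩ := hc.exists_isCycle_of_forall_notMem hGH
        fun z hz hzw => hwc (hzw ▸ hz)
      exact h.threeDvdCycleFree cH hcH (hlen ▸ hdvd)
  · obtain ⟨z, hz, P', hrev⟩ := exists_eq_cons_of_ne hwx P.reverse
    have hP' : (cons hz P').IsPath := hrev ▸ hP.reverse
    obtain ⟨PH, hPH, hlenH⟩ := hP'.of_cons.exists_isPath_of_forall_notMem hGH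
      fun v hv hvw => ((cons_isPath_iff _ _).mp hP').2 (hvw ▸ hv)
    have hlen : P.length = P'.length + 1 := by simpa using congrArg length hrev
    exact h.threeDvdCycleFree.not_dvd_length_add_one ((hNx z).mpr ((hNw z).mp hz)) hPH
      (by omega)

theorem of_square {x y a b c d : V} (h : ExcInvariant H x y) (hxy : H.Adj x y)
    (hGH : ∀ u v, G.Adj u v → u ∉ ({a, b, c, d} : Set V) → v ∉ ({a, b, c, d} : Set V) →
      H.Adj u v)
    (hNa : ∀ v, G.Adj a v ↔ v = b ∨ v = d ∨ v = x) (hNb : ∀ v, G.Adj b v ↔ v = a ∨ v = c)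
    (hNc : ∀ v, G.Adj c v ↔ v = b ∨ v = d ∨ v = y) (hNd : ∀ v, G.Adj d v ↔ v = a ∨ v = c)
    (hac : a ≠ c) (hbd : b ≠ d) (hbx : b ≠ x) (hcx : c ≠ x) (hdx : d ≠ x) :
    ExcInvariant G b d := by
  have hbc : b ≠ c := ((hNb c).mpr (Or.inr rfl)).ne
  have hda : d ≠ a := ((hNd a).mpr (Or.inl rfl)).ne
  have hdc : d ≠ c := ((hNd c).mpr (Or.inr rfl)).ne
  have key_b : ∀ m : G.Walk a c, m.IsPath → b ∉ m.support → ¬ 3 ∣ m.length + 2 :=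
    fun m => h.threeDvdCycleFree.not_dvd_length_add_two_of_square hxy hGH (by simp)
      (fun v hv => (hNa v).mp hv) (fun v hv => (hNc v).mp hv) (fun v hv => (hNd v).mp hv)
      hac hcx hdc hdx
  have key_d : ∀ m : G.Walk a c, m.IsPath → d ∉ m.support → ¬ 3 ∣ m.length + 2 :=
    fun m => h.threeDvdCycleFree.not_dvd_length_add_two_of_square hxy hGH (by simp)
      (fun v hv => by have := (hNa v).mp hv; tauto) (fun v hv => by have := (hNc v).mp hv; tauto)
      (fun v hv => (hNb v).mp hv) hac hcx hbc hbx
  refine ⟨⟨a, (hNb a).mpr (Or.inl rfl)⟩, ⟨a, (hNd a).mpr (Or.inl rfl)⟩, fun u C hC hdvd => ?_,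
    fun _ P hP hdvd => ?_⟩
  · by_cases hS : a ∈ C.support ∨ b ∈ C.support ∨ c ∈ C.support ∨ d ∈ C.support
    · have hbdC : b ∈ C.support ∨ d ∈ C.support := by
        rcases hS with hS | hS | hS | hS
        · obtain ⟨w, hw, hwC, hwx⟩ := hC.exists_adj_mem_support_ne hS x
          rcases (hNa w).mp hw with rfl | rfl | rfl <;> tauto
        · exact Or.inl hS
        · obtain ⟨w, hw, hwC, hwy⟩ := hC.exists_adj_mem_support_ne hS y
          rcases (hNc w).mp hw with rfl | rfl | rfl <;> tauto
        · exact Or.inr hS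
      rcases hbdC with hbC | hdC
      · obtain ⟨m, hm, hbm, hlen⟩ := hC.exists_isPath_of_forall_adj hNb hbC
        exact key_b m hm hbm (hlen ▸ hdvd)
      · obtain ⟨m, hm, hdm, hlen⟩ := hC.exists_isPath_of_forall_adj hNd hdC
        exact key_d m hm hdm (hlen ▸ hdvd)
    · obtain ⟨CH, hCH, hlen⟩ := hC.exists_isCycle_of_forall_notMem hGH
        fun z hz hzS => hS (by rcases hzS with rfl | rfl | rfl | rfl <;> simp [hz])
      exact h.threeDvdCycleFree CH hCH (hlen ▸ hdvd)
  · rcases hP.length_eq_two_or_exists_isPath (fun v => (hNb v).mp) (fun v => (hNd v).mp) hbd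
      hda hdc with h2 | ⟨m, hm, hbm, hlen⟩
    · rw [h2] at hdvd
      omega
    · exact key_b m hm hbm (hlen ▸ hdvd)

theorem addSquare {x y a b c d : V} (h : ExcInvariant H x y)
    (hxy : H.Adj x y) (hd : ([a, b, c, d] : List V).Pairwise (· ≠ ·))
    (ha : H.neighborSet a = ∅) (hb : H.neighborSet b = ∅) (hc : H.neighborSet c = ∅)
    (hd' : H.neighborSet d = ∅) :
    ExcInvariant (H ⊔ fromEdgeSet
      {s(a, b), s(b, c), s(c, d), s(d, a), s(x, a), s(c, y)}) b d := by
  simp only [List.pairwise_cons, List.mem_cons, List.not_mem_nil, or_false, forall_eq_or_imp,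
    forall_eq, List.Pairwise.nil, and_true] at hd
  obtain ⟨⟨hab, hac, had⟩, ⟨hbc, hbd⟩, hcd, -⟩ := hd
  have hax := ne_of_neighborSet_eq_empty ha hxy
  have hay := ne_of_neighborSet_eq_empty ha hxy.symm
  have hcy := ne_of_neighborSet_eq_empty hc hxy.symm
  refine h.of_square hxy (fun u v => adj_of_sup_fromEdgeSet_adj (by simp)) ?_ ?_ ?_ ?_ hac hbd
    (ne_of_neighborSet_eq_empty hb hxy) (ne_of_neighborSet_eq_empty hc hxy)
    (ne_of_neighborSet_eq_empty hd' hxy) <;> intro v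
  · rw [sup_fromEdgeSet_adj_of_neighborSet_eq_empty ha]; aesop
  · rw [sup_fromEdgeSet_adj_of_neighborSet_eq_empty hb]; aesop
  · rw [sup_fromEdgeSet_adj_of_neighborSet_eq_empty hc]; aesop
  · rw [sup_fromEdgeSet_adj_of_neighborSet_eq_empty hd']; aesop

end ExcInvariant

end SimpleGraph

theorem ExcAux.excInvariant {V : Type*} {G : SimpleGraph V} {r x y : V} (h : ExcAux G r x y) :
    ExcInvariant G x y := by
  induction h with
  | base r x y a b hd => exact .base hd
  | symm G r x y _ ih => exact ih.symm
  | addPath H r x y p q _ hxy hpq hp hq ih => exact ih.addPath hxy hpq hp hq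
  | addTwin H r x y w a _ hxy hx hw ih => exact ih.addTwin hxy hx hw
  | addSquare H r x y a b c d _ hxy hd ha hb hc hd' ih => exact ih.addSquare hxy hd ha hb hc hd'

/-- Every exceptional graph contains no cycle whose length is divisible by 3. -/
theorem stmt_9 {V : Type*} (G : SimpleGraph V) (r x y : V)
    (hG : ExcAux G r x y) :
    ¬ ∃ (u : V) (c : G.Walk u u), c.IsCycle ∧ 3 ∣ c.length := by
  rintro ⟨u, c, hc, hdvd⟩
  exact hG.excInvariant.threeDvdCycleFree c hc hdvd
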